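/- (Proposition 2, simultaneous diagonalizability) Suppose P₁ = (U⊗V) Λ (U⊗V)^H with U, V unitary, Λ nonnegative block-diagonal. Consider any sequence of operations on P of two types: (i) measurement updates P ↦ P − P S_i (S_i^H P S_i + σ²I)^{-1} S_i^H P with S_i = √ρ(u_i ⊗ I_{N_r}) for some column u_i of U, and (ii) prediction updates P ↦ a² P + (1−a²) P₁. Then every matrix produced by any such sequence has the form (U⊗V) D (U⊗V)^H for some nonnegative diagonal matrix D; i.e., all iterates are simultaneously diagonalizable with P₁. -/

import Mathlib

open Matrix Kronecker

/-- The Kalman measurement update with pilot beam `√ρ (u_i ⊗ I_{N_r})`, where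
`u_i` is the `i`-th column of `U`. -/
noncomputable def measUpdate {Nt Nr : ℕ} (U : Matrix (Fin Nt) (Fin Nt) ℂ)
    (ρ σ2 : ℝ) (P : Matrix (Fin Nt × Fin Nr) (Fin Nt × Fin Nr) ℂ) (i : Fin Nt) :
    Matrix (Fin Nt × Fin Nr) (Fin Nt × Fin Nr) ℂ :=
  let S : Matrix (Fin Nt × Fin Nr) (Fin 1 × Fin Nr) ℂ :=
    (Real.sqrt ρ : ℂ) •
      ((Matrix.of fun k (_ : Fin 1) => U k i) ⊗ₖ (1 : Matrix (Fin Nr) (Fin Nr) ℂ))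
  P - P * S * (Sᴴ * P * S + (σ2 : ℂ) • 1)⁻¹ * Sᴴ * P

/-- The sequence of error covariance matrices produced from `P₁` by a sequence
of operations: at step `k`, `seq k = some i` performs a measurement update with
pilot direction `u_i`, and `seq k = none` performs the prediction update
`P ↦ a²P + (1-a²)P₁`. -/
noncomputable def kalmanSeq {Nt Nr : ℕ} (U : Matrix (Fin Nt) (Fin Nt) ℂ)
    (ρ σ2 a : ℝ) (P1 : Matrix (Fin Nt × Fin Nr) (Fin Nt × Fin Nr) ℂ)
    (seq : ℕ → Option (Fin Nt)) : ℕ → Matrix (Fin Nt × Fin Nr) (Fin Nt × Fin Nr) ℂ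
  | 0 => P1
  | k + 1 =>
    match seq k with
    | some i => measUpdate U ρ σ2 (kalmanSeq U ρ σ2 a P1 seq k) i
    | none => (a ^ 2 : ℝ) • kalmanSeq U ρ σ2 a P1 seq k + (1 - a ^ 2 : ℝ) • P1

/-!
Write `W = U ⊗ V`. The measurement update commutes with conjugation by the unitary `W`,
and it does not see a unitary change of basis `S ↦ S Q` of the pilot space. Since
`√ρ (u_i ⊗ I) = W (√ρ E_i) (I ⊗ Vᴴ)`, where `E_i` selects the coordinates of the `i`-th
block, updating `W D Wᴴ` amounts to updating the diagonal matrix `D` with the selection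
pilot `√ρ E_i`, which is again diagonal: `D` is only rescaled, entry by entry, on the
`i`-th block. The prediction update is a nonnegative combination of two matrices of the
form `W D Wᴴ`, and induction over the sequence of operations concludes.
-/

namespace Matrix

section KalmanUpdate

variable {R : Type*} [CommRing R] [StarRing R] {l m n : Type*} [Fintype l] [Fintype m]
  [Fintype n] [DecidableEq m]

noncomputable def kalmanUpdate (P : Matrix n n R) (S : Matrix n m R) (s : R) : Matrix n n R :=
  P - P * S * (Sᴴ * P * S + s • 1)⁻¹ * Sᴴ * P

theorem kalmanUpdate_eq (P : Matrix n n R) (S : Matrix n m R) (s : R) :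
    kalmanUpdate P S s = P - (P * S) * (Sᴴ * P * S + s • 1)⁻¹ * (Sᴴ * P) := by
  simp only [kalmanUpdate, Matrix.mul_assoc]

theorem kalmanUpdate_conj [DecidableEq l] {W : Matrix n l R} (hW : Wᴴ * W = 1) (D : Matrix l l R)
    (T : Matrix l m R) (s : R) :
    kalmanUpdate (W * D * Wᴴ) (W * T) s = W * kalmanUpdate D T s * Wᴴ := by
  have hPS : W * D * Wᴴ * (W * T) = W * (D * T) := by
    rw [Matrix.mul_assoc, ← Matrix.mul_assoc Wᴴ, hW, Matrix.one_mul, Matrix.mul_assoc]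
  have hSP : (W * T)ᴴ * (W * D * Wᴴ) = Tᴴ * D * Wᴴ := by
    rw [conjTranspose_mul, Matrix.mul_assoc, ← Matrix.mul_assoc Wᴴ, ← Matrix.mul_assoc Wᴴ,
      hW, Matrix.one_mul, Matrix.mul_assoc]
  have hSPS : (W * T)ᴴ * (W * D * Wᴴ) * (W * T) = Tᴴ * D * T := by
    rw [hSP, Matrix.mul_assoc, ← Matrix.mul_assoc Wᴴ, hW, Matrix.one_mul, Matrix.mul_assoc]
  rw [kalmanUpdate_eq, kalmanUpdate_eq, hSPS, hSP, hPS, Matrix.mul_sub, Matrix.sub_mul]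
  simp only [Matrix.mul_assoc]

theorem kalmanUpdate_mul_unitary (P : Matrix n n R) (S : Matrix n m R) {Q : Matrix m m R}
    (hQ : Q ∈ unitaryGroup m R) (s : R) :
    kalmanUpdate P (S * Q) s = kalmanUpdate P S s := by
  have hQQ : Q * Qᴴ = 1 := mem_unitaryGroup_iff.mp hQ
  have hQQ' : Qᴴ * Q = 1 := mem_unitaryGroup_iff'.mp hQ
  have hM : (S * Q)ᴴ * P * (S * Q) + s • 1 = Qᴴ * (Sᴴ * P * S + s • 1) * Q := by
    rw [Matrix.mul_add, Matrix.add_mul, Matrix.mul_smul, Matrix.smul_mul, Matrix.mul_one, hQQ',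
      conjTranspose_mul]
    simp only [Matrix.mul_assoc]
  rw [kalmanUpdate_eq, kalmanUpdate_eq, hM, Matrix.mul_inv_rev, Matrix.mul_inv_rev,
    inv_eq_left_inv hQQ, inv_eq_left_inv hQQ', conjTranspose_mul]
  simp only [← Matrix.mul_assoc, Matrix.mul_assoc _ Q Qᴴ, hQQ, Matrix.mul_one]

end KalmanUpdate

section Selection

variable {R : Type*} [Semiring R] {m n : Type*} [DecidableEq n]

theorem conjTranspose_one_submatrix_mul_mul_one_submatrix [StarRing R] [Fintype n] (g : m → n)
    (A : Matrix n n R) :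
    ((1 : Matrix n n R).submatrix id g)ᴴ * A * (1 : Matrix n n R).submatrix id g =
      A.submatrix g g := by
  ext p q
  simp [mul_apply, one_apply]

theorem diagonal_mul_one_submatrix [Fintype m] [Fintype n] [DecidableEq m] (g : m → n)
    (d : n → R) :
    diagonal d * (1 : Matrix n n R).submatrix id g =
      (1 : Matrix n n R).submatrix id g * diagonal (d ∘ g) := by
  ext x p
  by_cases h : x = g p <;> simp [h, one_apply]

theorem conjTranspose_one_submatrix_mul_diagonal [StarRing R] [Fintype m] [Fintype n]
    [DecidableEq m] (g : m → n) (d : n → R) :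
    ((1 : Matrix n n R).submatrix id g)ᴴ * diagonal d =
      diagonal (d ∘ g) * ((1 : Matrix n n R).submatrix id g)ᴴ := by
  ext p x
  by_cases h : x = g p <;> simp [h, one_apply, Ne.symm]

theorem one_submatrix_mul_diagonal_mul_conjTranspose [StarRing R] [Fintype m] [DecidableEq m]
    {g : m → n} (hg : g.Injective) (h : n → R) :
    (1 : Matrix n n R).submatrix id g * diagonal (h ∘ g) *
      ((1 : Matrix n n R).submatrix id g)ᴴ =
      diagonal ((Set.range g).indicator h) := by
  ext x y
  by_cases hx : x ∈ Set.range g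
  · obtain ⟨p, rfl⟩ := hx
    simp only [mul_apply, one_apply, diagonal_apply, submatrix_apply, conjTranspose_apply, id,
      Function.comp_apply]
    rw [Fintype.sum_eq_single p (fun j hj => by simp [hg.ne hj.symm])]
    rcases eq_or_ne y (g p) with rfl | hy
    · simp
    · simp [hy, hy.symm]
  · have hxg : ∀ j, x ≠ g j := fun j hj => hx ⟨j, hj.symm⟩
    simp [mul_apply, one_apply, diagonal_apply, hx, hxg]

theorem kalmanUpdate_diagonal_smul_one_submatrix {K : Type*} [Field K] [StarRing K]
    [Fintype m] [Fintype n] [DecidableEq m] {g : m → n} (hg : g.Injective) (d : n → K) (c s : K)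
    (hd : ∀ p, star c * c * d (g p) + s ≠ 0) :
    kalmanUpdate (diagonal d) (c • (1 : Matrix n n K).submatrix id g) s =
      diagonal fun x => if x ∈ Set.range g then d x * s / (star c * c * d x + s) else d x := by
  set E := (1 : Matrix n n K).submatrix id g
  have hM : (c • E)ᴴ * diagonal d * (c • E) + s • 1 =
      diagonal ((fun x => star c * c * d x + s) ∘ g) := by
    simp only [conjTranspose_smul, Matrix.smul_mul, Matrix.mul_smul, smul_smul]
    rw [conjTranspose_one_submatrix_mul_mul_one_submatrix, submatrix_diagonal _ _ hg,
      ← diagonal_one, ← diagonal_smul, ← diagonal_smul, diagonal_add, mul_comm c]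
    congr 1
    funext p
    simp
  have hMinv : (diagonal ((fun x => star c * c * d x + s) ∘ g))⁻¹ =
      diagonal ((fun x => (star c * c * d x + s)⁻¹) ∘ g) := by
    refine inv_eq_left_inv ?_
    rw [diagonal_mul_diagonal, ← diagonal_one]
    exact congrArg diagonal (funext fun p => inv_mul_cancel₀ (hd p))
  have hGain : diagonal d * (c • E) * diagonal ((fun x => (star c * c * d x + s)⁻¹) ∘ g) *
      ((c • E)ᴴ * diagonal d) = (star c * c) •
        diagonal ((Set.range g).indicator fun x => d x * (star c * c * d x + s)⁻¹ * d x) := by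
    simp only [conjTranspose_smul, Matrix.smul_mul, Matrix.mul_smul, smul_smul]
    rw [diagonal_mul_one_submatrix, conjTranspose_one_submatrix_mul_diagonal, Matrix.mul_assoc E,
      diagonal_mul_diagonal, ← Matrix.mul_assoc, Matrix.mul_assoc E, diagonal_mul_diagonal,
      ← one_submatrix_mul_diagonal_mul_conjTranspose hg]
    rfl
  rw [kalmanUpdate_eq, hM, hMinv, hGain, ← diagonal_smul, diagonal_sub]
  congr 1
  ext x
  by_cases hx : x ∈ Set.range g
  · obtain ⟨p, rfl⟩ := hx
    have hp := hd p
    generalize star c * c = r at hp ⊢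
    simp only [Pi.smul_apply, Set.indicator_of_mem (Set.mem_range_self p),
      if_pos (Set.mem_range_self p), smul_eq_mul]
    generalize d (g p) = a at hp ⊢
    rw [mul_comm r] at hp
    field_simp
    ring
  · simp [hx]

end Selection

section Pilot

variable {R : Type*} [CommRing R] [StarRing R] {ι κ : Type*} [Fintype ι] [Fintype κ]
  [DecidableEq ι] [DecidableEq κ]

theorem col_kronecker_one_eq_kronecker_mul {U : Matrix ι ι R} {V : Matrix κ κ R}
    (hV : V * Vᴴ = 1) (i : ι) :
    (of fun k (_ : Fin 1) => U k i) ⊗ₖ (1 : Matrix κ κ R) =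
      (U ⊗ₖ V) *
        ((1 : Matrix (ι × κ) (ι × κ) R).submatrix id (Prod.map (fun _ : Fin 1 => i) id) *
          ((1 : Matrix (Fin 1) (Fin 1) R) ⊗ₖ Vᴴ)) := by
  have hE : (1 : Matrix (ι × κ) (ι × κ) R).submatrix id (Prod.map (fun _ : Fin 1 => i) id) =
      (1 : Matrix ι ι R).submatrix id (fun _ => i) ⊗ₖ (1 : Matrix κ κ R) := by
    rw [← one_kronecker_one]
    rfl
  have hUe : U * (1 : Matrix ι ι R).submatrix id (fun _ : Fin 1 => i) = of fun k _ => U k i := by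
    ext k j
    simp [mul_apply, one_apply]
  rw [hE, ← Matrix.mul_assoc, ← mul_kronecker_mul, ← mul_kronecker_mul, hUe, Matrix.mul_one,
    Matrix.mul_one, hV]

end Pilot

end Matrix

theorem measUpdate_kronecker_conj_diagonal {Nt Nr : ℕ} {U : Matrix (Fin Nt) (Fin Nt) ℂ}
    {V : Matrix (Fin Nr) (Fin Nr) ℂ} (hU : U ∈ unitaryGroup (Fin Nt) ℂ)
    (hV : V ∈ unitaryGroup (Fin Nr) ℂ) {ρ : ℝ} (hρ : 0 ≤ ρ) (σ2 : ℝ)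
    (d : Fin Nt × Fin Nr → ℝ) (hd : ∀ x, ρ * d x + σ2 ≠ 0) (i : Fin Nt) :
    measUpdate U ρ σ2 ((U ⊗ₖ V) * diagonal (fun x => (d x : ℂ)) * (U ⊗ₖ V)ᴴ) i =
      (U ⊗ₖ V) *
        diagonal (fun x => ((if x.1 = i then d x * σ2 / (ρ * d x + σ2) else d x : ℝ) : ℂ)) *
        (U ⊗ₖ V)ᴴ := by
  have hW : (U ⊗ₖ V)ᴴ * (U ⊗ₖ V) = 1 :=
    mem_unitaryGroup_iff'.mp (kronecker_mem_unitary hU hV)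
  have hQ : (1 : Matrix (Fin 1) (Fin 1) ℂ) ⊗ₖ Vᴴ ∈ unitaryGroup (Fin 1 × Fin Nr) ℂ :=
    kronecker_mem_unitary (one_mem _) (Unitary.star_mem hV)
  have hg : (Prod.map (fun _ : Fin 1 => i) (id : Fin Nr → Fin Nr)).Injective :=
    (Function.injective_of_subsingleton _).prodMap Function.injective_id
  have hρρ : star (Real.sqrt ρ : ℂ) * Real.sqrt ρ = ρ := by
    rw [Complex.star_def, Complex.conj_ofReal, ← Complex.ofReal_mul, Real.mul_self_sqrt hρ]
  change kalmanUpdate _ ((Real.sqrt ρ : ℂ) • _) (σ2 : ℂ) = _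
  rw [col_kronecker_one_eq_kronecker_mul (mem_unitaryGroup_iff.mp hV),
    ← Matrix.mul_smul, ← Matrix.smul_mul, kalmanUpdate_conj hW, kalmanUpdate_mul_unitary _ _ hQ,
    kalmanUpdate_diagonal_smul_one_submatrix hg _ _ _ (fun _ => by rw [hρρ]; exact_mod_cast hd _),
    hρρ]
  congr 3 with x
  simp only [Set.range_prodMap, Set.range_const, Set.range_id, Set.mem_prod,
    Set.mem_singleton_iff, Set.mem_univ, and_true]
  split_ifs <;> push_cast <;> rfl

theorem real_smul_mul_diagonal_mul_add {m n : Type*} [Fintype n] [DecidableEq n]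
    (A : Matrix m n ℂ) (B : Matrix n m ℂ) (r t : ℝ) (d e : n → ℝ) :
    r • (A * diagonal (fun x => (d x : ℂ)) * B) +
        t • (A * diagonal (fun x => (e x : ℂ)) * B) =
      A * diagonal (fun x => ((r * d x + t * e x : ℝ) : ℂ)) * B := by
  have hdiag : diagonal (fun x => ((r * d x + t * e x : ℝ) : ℂ)) =
      r • diagonal (fun x => (d x : ℂ)) + t • diagonal (fun x => (e x : ℂ)) := by
    rw [← diagonal_smul, ← diagonal_smul, diagonal_add]
    congr 1 with x
    simp [Complex.real_smul]
  rw [hdiag, Matrix.mul_add, Matrix.add_mul, Matrix.mul_smul, Matrix.smul_mul, Matrix.mul_smul,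
    Matrix.smul_mul]

/-- Proposition 2: every iterate produced by any sequence of
measurement updates (with pilot directions taken from the columns of `U`) and
prediction updates is of the form `(U⊗V) D (U⊗V)ᴴ` with `D` nonnegative
diagonal, i.e. all iterates are simultaneously diagonalizable with `P₁`. -/
theorem stmt8 {Nt Nr : ℕ}
    (U : Matrix (Fin Nt) (Fin Nt) ℂ) (V : Matrix (Fin Nr) (Fin Nr) ℂ)
    (hU : Uᴴ * U = 1 ∧ U * Uᴴ = 1) (hV : Vᴴ * V = 1 ∧ V * Vᴴ = 1)
    (l : Fin Nt × Fin Nr → ℝ) (hl : ∀ x, 0 ≤ l x)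
    (P1 : Matrix (Fin Nt × Fin Nr) (Fin Nt × Fin Nr) ℂ)
    (hP1 : P1 = (U ⊗ₖ V) * Matrix.diagonal (fun x => (l x : ℂ)) * (U ⊗ₖ V)ᴴ)
    (a ρ σ2 : ℝ) (ha : 0 < a) (ha1 : a ≤ 1) (hρ : 0 < ρ) (hσ : 0 < σ2)
    (seq : ℕ → Option (Fin Nt)) :
    ∀ k : ℕ, ∃ d : Fin Nt × Fin Nr → ℝ, (∀ x, 0 ≤ d x) ∧
      kalmanSeq U ρ σ2 a P1 seq k =
        (U ⊗ₖ V) * Matrix.diagonal (fun x => (d x : ℂ)) * (U ⊗ₖ V)ᴴ := by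
  have hU' : U ∈ unitaryGroup (Fin Nt) ℂ := mem_unitaryGroup_iff'.mpr hU.1
  have hV' : V ∈ unitaryGroup (Fin Nr) ℂ := mem_unitaryGroup_iff'.mpr hV.1
  have ha2 : a ^ 2 ≤ 1 := pow_le_one₀ ha.le ha1
  intro k
  induction k with
  | zero => exact ⟨l, hl, hP1⟩
  | succ k ih =>
    obtain ⟨d, hd, hk⟩ := ih
    rw [kalmanSeq]
    cases seq k with
    | some i =>
      refine ⟨_, fun x => ?_, hk ▸ measUpdate_kronecker_conj_diagonal hU' hV' hρ.le σ2 d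
        (fun x => by have hdx := hd x; positivity) i⟩
      have hdx := hd x
      split_ifs <;> positivity
    | none =>
      exact ⟨_, fun x => add_nonneg (mul_nonneg (sq_nonneg a) (hd x))
        (mul_nonneg (sub_nonneg.mpr ha2) (hl x)), by rw [hk, hP1, real_smul_mul_diagonal_mul_add]⟩
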